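/- (Unstable Disk Theorem.) Suppose |k̂ + np| > |p| for every n ∈ ℤ. Set σ = (sup_{n∈ℤ}(−ρ_n)) / (inf_{n∈ℤ}(−ρ_n)); then 0 < σ < ∞. For every differentiable z : ℝ → ℓ²(ℤ,ℂ) with z'(t) = L_A z(t) for all t ∈ ℝ, one has ∑_{n∈ℤ} |z_n(t)|² ≤ σ · ∑_{n∈ℤ} |z_n(0)|² for all t ∈ ℝ; in particular the invariant subsystem on the class Σ_{k̂} is Liapunov stable for all time. -/

import Mathlib

noncomputable section

open Complex
open scoped ENNReal

/-- Squared Euclidean norm `|q|² = q₁² + q₂²` of a lattice vector `q ∈ ℤ²`. -/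
def nsq (q : ℤ × ℤ) : ℝ := (q.1 : ℝ)^2 + (q.2 : ℝ)^2

/-- `ρ_n = |k̂ + np|⁻² − |p|⁻²`. -/
def rho (kh p : ℤ × ℤ) (n : ℤ) : ℝ := (nsq (kh + n • p))⁻¹ - (nsq p)⁻¹

local notation "H" => lp (fun _ : ℤ => ℂ) 2

lemma two_toReal : ((2:ℝ≥0∞).toReal) = ((2:ℕ):ℝ) := by norm_num

lemma sq_summable (f : H) : Summable (fun n : ℤ => ‖f n‖ ^ 2) := by
  have h := (lp.memℓp f).summable (p := 2) (by norm_num)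
  convert h using 2 with n
  rw [two_toReal, Real.rpow_natCast]

lemma mul_sq_summable (w : ℤ → ℝ) (C : ℝ) (hC : ∀ n, |w n| ≤ C) (f : H) :
    Summable (fun n : ℤ => ‖(w n : ℂ) * f n‖ ^ 2) := by
  have hmaj : Summable (fun n : ℤ => C^2 * ‖f n‖^2) := (sq_summable f).mul_left _
  refine hmaj.of_nonneg_of_le (fun n => by positivity) (fun n => ?_)
  rw [norm_mul, mul_pow, Complex.norm_real, Real.norm_eq_abs]
  have := hC n
  have h0 : (0:ℝ) ≤ |w n| := abs_nonneg _
  have h2 : |w n| ^ 2 ≤ C ^ 2 := by nlinarith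
  nlinarith [sq_nonneg (‖f n‖), sq_nonneg (C - |w n|)]

lemma memℓp_mul (w : ℤ → ℝ) (C : ℝ) (hC : ∀ n, |w n| ≤ C) (f : H) :
    Memℓp (fun n => (w n : ℂ) * f n) 2 := by
  apply memℓp_gen
  have := mul_sq_summable w C hC f
  convert this using 2 with n
  rw [two_toReal, Real.rpow_natCast]

/-- Multiplication by a bounded real sequence as a continuous linear map on `ℓ²(ℤ,ℂ)`. -/
def mulCLM (w : ℤ → ℝ) (C : ℝ) (hC : ∀ n, |w n| ≤ C) : H →L[ℂ] H :=
  LinearMap.mkContinuous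
    { toFun := fun f => ⟨fun n => (w n : ℂ) * f n, memℓp_mul w C hC f⟩
      map_add' := by
        intro f g
        ext n
        simp [mul_add]
        rfl
      map_smul' := by
        intro c f
        ext n
        simp [smul_eq_mul]
        ring }
    C
    (by
      intro f
      have hC0 : 0 ≤ C := le_trans (abs_nonneg _) (hC 0)
      apply lp.norm_le_of_tsum_le (by norm_num) (mul_nonneg hC0 (norm_nonneg f))
      have h1 : ∀ n : ℤ, ‖(w n : ℂ) * f n‖ ^ ((2:ℝ≥0∞).toReal) ≤ C^2 * ‖f n‖^2 := by
        intro n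
        rw [two_toReal, Real.rpow_natCast, norm_mul, mul_pow, Complex.norm_real,
          Real.norm_eq_abs]
        have := hC n
        have h0 : (0:ℝ) ≤ |w n| := abs_nonneg _
        have h2 : |w n| ^ 2 ≤ C ^ 2 := by nlinarith
        nlinarith [sq_nonneg (‖f n‖)]
      calc ∑' n : ℤ, ‖(w n : ℂ) * f n‖ ^ ((2:ℝ≥0∞).toReal)
          ≤ ∑' n : ℤ, C^2 * ‖f n‖^2 := by
            refine Summable.tsum_le_tsum h1 ?_ ((sq_summable f).mul_left _)
            · have := mul_sq_summable w C hC f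
              convert this using 2 with n
              rw [two_toReal, Real.rpow_natCast]
        _ = C^2 * ∑' n : ℤ, ‖f n‖^2 := tsum_mul_left
        _ = (C * ‖f‖) ^ ((2:ℝ≥0∞).toReal) := by
            rw [two_toReal, Real.rpow_natCast]
            have : ∑' n : ℤ, ‖f n‖^2 = ‖f‖^2 := by
              have h := lp.norm_rpow_eq_tsum (p := 2) (by norm_num) f
              simp only [two_toReal, Real.rpow_natCast] at h
              rw [h]
            rw [this]
            ring)

lemma mulCLM_apply (w : ℤ → ℝ) (C : ℝ) (hC : ∀ n, |w n| ≤ C) (f : H) (n : ℤ) :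
    mulCLM w C hC f n = (w n : ℂ) * f n := rfl

local notation "⟪" x ", " y "⟫" => @inner ℂ _ _ x y

lemma inner_H (f g : H) : ⟪f, g⟫ = ∑' n : ℤ, (starRingEnd ℂ) (f n) * g n := by
  rw [lp.inner_eq_tsum]
  simp [RCLike.inner_apply]
  exact tsum_congr fun n => mul_comm _ _

lemma w_summable (w : ℤ → ℝ) (C : ℝ) (hC : ∀ n, |w n| ≤ C) (f : H) :
    Summable (fun n : ℤ => w n * ‖f n‖^2) := by
  apply Summable.of_norm
  have hmaj : Summable (fun n : ℤ => C * ‖f n‖^2) := (sq_summable f).mul_left _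
  refine hmaj.of_nonneg_of_le (fun n => by positivity) (fun n => ?_)
  rw [Real.norm_eq_abs, abs_mul, _root_.abs_of_nonneg (by positivity : (0:ℝ) ≤ ‖f n‖^2)]
  exact mul_le_mul_of_nonneg_right (hC n) (by positivity)

lemma energy_eq (w : ℤ → ℝ) (C : ℝ) (hC : ∀ n, |w n| ≤ C) (f : H) :
    (⟪f, mulCLM w C hC f⟫).re = ∑' n : ℤ, w n * ‖f n‖^2 := by
  rw [inner_H]
  have h1 : ∀ n : ℤ, (starRingEnd ℂ) (f n) * (mulCLM w C hC f n)
      = ((w n * ‖f n‖^2 : ℝ) : ℂ) := by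
    intro n
    rw [mulCLM_apply]
    rw [show (starRingEnd ℂ) (f n) * ((w n : ℂ) * f n)
        = (w n : ℂ) * ((starRingEnd ℂ) (f n) * f n) by ring]
    rw [RCLike.conj_mul]
    rw [Complex.ofReal_mul, Complex.ofReal_pow]
    rfl
  rw [tsum_congr h1, ← Complex.ofReal_tsum, Complex.ofReal_re]

set_option maxHeartbeats 1000000 in
lemma skew (w ρ : ℤ → ℝ) (C : ℝ) (hC : ∀ n, |w n| ≤ C) (hw : ∀ n, w n = - ρ n)
    (a : ℝ) (f g : H)
    (hg : ∀ n : ℤ, g n = Complex.I * (a:ℂ) *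
      ((ρ (n-1):ℂ) * f (n-1) + (ρ (n+1):ℂ) * f (n+1))) :
    (⟪mulCLM w C hC f, g⟫).re = 0 := by
  set A : ℤ → ℂ := fun n =>
    (w n : ℂ) * (starRingEnd ℂ) (f n) * (Complex.I * (a:ℂ) * (ρ (n+1):ℂ) * f (n+1)) with hAdef
  have hCnn : 0 ≤ C := le_trans (abs_nonneg _) (hC 0)
  have hrho : ∀ n, |ρ n| ≤ C := by
    intro n
    have := hC n
    rwa [hw n, abs_neg] at this
  -- summability of A
  have hshift : Summable (fun n : ℤ => ‖f (n+1)‖^2) :=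
    ((Equiv.addRight (1:ℤ)).summable_iff).mpr (sq_summable f)
  have hmaj : Summable (fun n : ℤ => (C * |a| * C) * (‖f n‖^2 + ‖f (n+1)‖^2)) :=
    ((sq_summable f).add hshift).mul_left _
  have hA : Summable A := by
    apply Summable.of_norm
    refine hmaj.of_nonneg_of_le (fun n => norm_nonneg _) (fun n => ?_)
    have : ‖A n‖ = |w n| * ‖f n‖ * (|a| * |ρ (n+1)| * ‖f (n+1)‖) := by
      simp [hAdef, map_mul, abs_mul]
    rw [this]
    have h1 : |w n| * ‖f n‖ * (|a| * |ρ (n+1)| * ‖f (n+1)‖)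
        ≤ C * |a| * C * (‖f n‖ * ‖f (n+1)‖) := by
      have := hC n; have := hrho (n+1)
      have hfn : (0:ℝ) ≤ ‖f n‖ := norm_nonneg _
      have hfn1 : (0:ℝ) ≤ ‖f (n+1)‖ := norm_nonneg _
      have ha1 : (0:ℝ) ≤ |a| := abs_nonneg _
      calc |w n| * ‖f n‖ * (|a| * |ρ (n+1)| * ‖f (n+1)‖)
          = (|w n| * |ρ (n+1)|) * (|a| * (‖f n‖ * ‖f (n+1)‖)) := by ring
        _ ≤ (C * C) * (|a| * (‖f n‖ * ‖f (n+1)‖)) := by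
            have := hC n; have := hrho (n+1)
            gcongr
        _ = C * |a| * C * (‖f n‖ * ‖f (n+1)‖) := by ring
    refine h1.trans ?_
    have hK : (0:ℝ) ≤ C * |a| * C := by positivity
    have : ‖f n‖ * ‖f (n+1)‖ ≤ ‖f n‖^2 + ‖f (n+1)‖^2 := by
      nlinarith [sq_nonneg (‖f n‖ - ‖f (n+1)‖), sq_nonneg (‖f n‖), sq_nonneg (‖f (n+1)‖)]
    exact mul_le_mul_of_nonneg_left this hK
  have hA' : Summable (fun n : ℤ => A (n-1)) :=
    ((Equiv.subRight (1:ℤ)).summable_iff).mpr hA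
  have hconj : Summable (fun n : ℤ => (starRingEnd ℂ) (A (n-1))) :=
    hA'.map (starRingEnd ℂ) Complex.continuous_conj
  -- pointwise decomposition
  have hterm : ∀ n : ℤ, (starRingEnd ℂ) ((mulCLM w C hC f) n) * g n
      = A n + (-(starRingEnd ℂ) (A (n-1))) := by
    intro n
    rw [mulCLM_apply, hg n, hAdef]
    simp only [map_mul, Complex.conj_ofReal, Complex.conj_I, map_neg]
    rw [hw n, hw (n-1)]
    push_cast
    ring_nf
    simp only [Complex.conj_conj]
  -- sum it up
  rw [inner_H, tsum_congr hterm]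
  rw [Summable.tsum_add hA (hconj.neg), tsum_neg]
  have h2 : ∑' n : ℤ, (starRingEnd ℂ) (A (n-1)) = (starRingEnd ℂ) (∑' n : ℤ, A (n-1)) :=
    ((hA'.hasSum).map (starRingEnd ℂ) Complex.continuous_conj).tsum_eq
  have h3 : ∑' n : ℤ, A (n-1) = ∑' n, A n := (Equiv.subRight (1:ℤ)).tsum_eq A
  rw [h2, h3]
  simp [Complex.add_re, Complex.neg_re, Complex.conj_re]

lemma nsq_cast (q : ℤ × ℤ) : nsq q = ((q.1^2 + q.2^2 : ℤ) : ℝ) := by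
  simp [nsq]

set_option maxHeartbeats 1000000 in
/-- **Unstable Disk Theorem.** If the class `Σ_{k̂}` avoids the closed disk `D̄_{|p|}`
(i.e. `|k̂ + np| > |p|` for all `n ∈ ℤ`), then with
`σ = sup_n(−ρ_n) / inf_n(−ρ_n)` one has `0 < σ` and every solution of the linearized
2D Euler equation `ż = L_A z` satisfies `∑_n |z_n(t)|² ≤ σ ∑_n |z_n(0)|²` for all `t`:
Liapunov stability for all time. -/
theorem stmt4 (p kh : ℤ × ℤ) (hp : p ≠ 0) (hkh : kh ≠ 0)
    (hdet : p.1 * kh.2 - p.2 * kh.1 ≠ 0)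
    (Γ : ℂ) (hΓ : Γ ≠ 0) (a : ℝ)
    (ha : a = (1/2) * ‖Γ‖ * ((p.1 : ℝ) * (kh.2 : ℝ) - (p.2 : ℝ) * (kh.1 : ℝ)))
    (hout : ∀ n : ℤ, nsq p < nsq (kh + n • p))
    (T : lp (fun _ : ℤ => ℂ) 2 →L[ℂ] lp (fun _ : ℤ => ℂ) 2)
    (hT : ∀ (z : lp (fun _ : ℤ => ℂ) 2) (n : ℤ),
      T z n = Complex.I * (a : ℂ) *
        ((rho kh p (n - 1) : ℂ) * z (n - 1) + (rho kh p (n + 1) : ℂ) * z (n + 1)))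
    (σ : ℝ)
    (hσ : σ = (⨆ n : ℤ, -(rho kh p n)) / (⨅ n : ℤ, -(rho kh p n))) :
    0 < σ ∧
    ∀ z : ℝ → lp (fun _ : ℤ => ℂ) 2, (∀ t : ℝ, HasDerivAt z (T (z t)) t) →
      ∀ t : ℝ, ∑' n : ℤ, ‖z t n‖^2 ≤ σ * ∑' n : ℤ, ‖z 0 n‖^2 := by
  set w : ℤ → ℝ := fun n => -(rho kh p n) with hwdef
  -- integrality bounds
  have hP1 : (1:ℝ) ≤ nsq p := by
    rw [nsq_cast]
    have h1 : p.1 ≠ 0 ∨ p.2 ≠ 0 := by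
      by_contra h
      push_neg at h
      exact hp (Prod.ext h.1 h.2)
    have h2 : (0:ℤ) < p.1^2 + p.2^2 := by
      rcases h1 with h | h
      · have := sq_nonneg p.2
        have h3 : 0 < p.1^2 := by positivity
        linarith
      · have := sq_nonneg p.1
        have h3 : 0 < p.2^2 := by positivity
        linarith
    exact_mod_cast h2
  have hQ : ∀ n : ℤ, nsq p + 1 ≤ nsq (kh + n • p) := by
    intro n
    have h := hout n
    rw [nsq_cast, nsq_cast] at h ⊢
    have h2 : (p.1^2 + p.2^2 : ℤ) < ((kh + n • p).1^2 + (kh + n • p).2^2 : ℤ) := by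
      exact_mod_cast h
    have h3 : (p.1^2 + p.2^2 : ℤ) + 1 ≤ ((kh + n • p).1^2 + (kh + n • p).2^2 : ℤ) := h2
    exact_mod_cast h3
  set c : ℝ := (nsq p * (nsq p + 1))⁻¹ with hcdef
  set C : ℝ := (nsq p)⁻¹ with hCdef
  have hPpos : (0:ℝ) < nsq p := by linarith
  have hc0 : 0 < c := by rw [hcdef]; positivity
  have hC0 : 0 < C := by rw [hCdef]; positivity
  have hlb : ∀ n, c ≤ w n := by
    intro n
    have hQn := hQ n
    have hQpos : (0:ℝ) < nsq (kh + n • p) := by linarith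
    have h1 : (nsq (kh + n • p))⁻¹ ≤ (nsq p + 1)⁻¹ :=
      inv_anti₀ (by linarith) hQn
    have e : (nsq p)⁻¹ - (nsq p + 1)⁻¹ = (nsq p * (nsq p + 1))⁻¹ := by
      field_simp
      ring
    have hw : w n = (nsq p)⁻¹ - (nsq (kh + n • p))⁻¹ := by
      simp [hwdef, rho]
    rw [hw, hcdef]
    linarith
  have hub : ∀ n, w n ≤ C := by
    intro n
    have hQn := hQ n
    have hQpos : (0:ℝ) < nsq (kh + n • p) := by linarith
    have hw : w n = (nsq p)⁻¹ - (nsq (kh + n • p))⁻¹ := by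
      simp [hwdef, rho]
    rw [hw, hCdef]
    have : 0 ≤ (nsq (kh + n • p))⁻¹ := by positivity
    linarith
  have habs : ∀ n, |w n| ≤ C := by
    intro n
    rw [abs_le]
    constructor
    · have := hlb n; linarith
    · exact hub n
  -- inf and sup
  have hbddB : BddBelow (Set.range w) := ⟨c, by rintro x ⟨n, rfl⟩; exact hlb n⟩
  have hbddA : BddAbove (Set.range w) := ⟨C, by rintro x ⟨n, rfl⟩; exact hub n⟩
  set m : ℝ := ⨅ n : ℤ, w n with hmdef
  set M : ℝ := ⨆ n : ℤ, w n with hMdef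
  have hm_lb : c ≤ m := le_ciInf hlb
  have hm0 : 0 < m := lt_of_lt_of_le hc0 hm_lb
  have hmle : ∀ n, m ≤ w n := fun n => ciInf_le hbddB n
  have hleM : ∀ n, w n ≤ M := fun n => le_ciSup hbddA n
  have hM0 : 0 < M := lt_of_lt_of_le hm0 ((hmle 0).trans (hleM 0))
  have hσeq : σ = M / m := hσ
  have hσ0 : 0 < σ := by rw [hσeq]; exact div_pos hM0 hm0
  refine ⟨hσ0, ?_⟩
  intro z hz t
  set W := mulCLM w C habs with hWdef
  -- energy
  have hskew : ∀ f : lp (fun _ : ℤ => ℂ) 2, (⟪W f, T f⟫).re = 0 := by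
    intro f
    exact skew w (rho kh p) C habs (fun n => rfl) a f (T f) (hT f)
  have hswap : ∀ f g : lp (fun _ : ℤ => ℂ) 2, ⟪f, W g⟫ = ⟪W f, g⟫ := by
    intro f g
    rw [inner_H, inner_H]
    apply tsum_congr
    intro n
    rw [mulCLM_apply, mulCLM_apply]
    simp only [map_mul, Complex.conj_ofReal]
    ring
  have hWz : ∀ s : ℝ, HasDerivAt (fun u => W (z u)) (W (T (z s))) s := by
    intro s
    exact ((W.restrictScalars ℝ).hasFDerivAt (x := z s)).comp_hasDerivAt s (hz s)
  have hF : ∀ s : ℝ, HasDerivAt (fun u => ⟪z u, W (z u)⟫)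
      (⟪z s, W (T (z s))⟫ + ⟪T (z s), W (z s)⟫) s := by
    intro s
    exact HasDerivAt.inner ℂ (hz s) (hWz s)
  have hg : ∀ s : ℝ, HasDerivAt (fun u => (⟪z u, W (z u)⟫).re) 0 s := by
    intro s
    have h := (Complex.reCLM.hasFDerivAt).comp_hasDerivAt s (hF s)
    have hval : Complex.reCLM (⟪z s, W (T (z s))⟫ + ⟪T (z s), W (z s)⟫) = 0 := by
      have e1 : ⟪z s, W (T (z s))⟫ = ⟪W (z s), T (z s)⟫ := hswap _ _
      have e2 : ⟪T (z s), W (z s)⟫ = (starRingEnd ℂ) ⟪W (z s), T (z s)⟫ := by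
        rw [← inner_conj_symm]
      simp only [Complex.reCLM_apply, e1, e2, Complex.add_re, Complex.conj_re]
      have := hskew (z s)
      linarith
    rw [hval] at h
    exact h
  have hconst : ∀ s : ℝ, (⟪z s, W (z s)⟫).re = (⟪z 0, W (z 0)⟫).re := by
    intro s
    exact is_const_of_deriv_eq_zero (fun u => (hg u).differentiableAt)
      (fun u => (hg u).deriv) s 0
  -- bounds
  have hlower : m * ∑' n : ℤ, ‖z t n‖^2 ≤ (⟪z t, W (z t)⟫).re := by
    rw [energy_eq, ← tsum_mul_left]
    refine Summable.tsum_le_tsum (fun n => ?_) ((sq_summable (z t)).mul_left m)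
      (w_summable w C habs (z t))
    exact mul_le_mul_of_nonneg_right (hmle n) (by positivity)
  have hupper : (⟪z 0, W (z 0)⟫).re ≤ M * ∑' n : ℤ, ‖z 0 n‖^2 := by
    rw [energy_eq, ← tsum_mul_left]
    refine Summable.tsum_le_tsum (fun n => ?_) (w_summable w C habs (z 0))
      ((sq_summable (z 0)).mul_left M)
    exact mul_le_mul_of_nonneg_right (hleM n) (by positivity)
  have hchain : m * ∑' n : ℤ, ‖z t n‖^2 ≤ M * ∑' n : ℤ, ‖z 0 n‖^2 := by
    calc m * ∑' n : ℤ, ‖z t n‖^2 ≤ (⟪z t, W (z t)⟫).re := hlower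
      _ = (⟪z 0, W (z 0)⟫).re := hconst t
      _ ≤ M * ∑' n : ℤ, ‖z 0 n‖^2 := hupper
  rw [hσeq, div_mul_eq_mul_div, le_div_iff₀ hm0]
  linarith
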